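/- arXiv:2602.22842 — 9 statements merged into one kernel-verified Lean document; each statement's English description precedes it below -/
import Mathlib

section
/- Let n ≥ 1 be an integer, let a < b be real numbers, and let f : ℝ → ℝ be (n-1)-times continuously differentiable on a neighborhood of [a,b]. Then the integral of the two-point Hermite interpolating polynomial satisfies ∫_a^b H_n(f;x) dx = Σ_{j=0}^{n-1} w_j^a f^{(j)}(a) + Σ_{j=0}^{n-1} w_j^b f^{(j)}(b), where w_j^a = (b-a)^{j+1} · n · Σ_{k=j}^{n-1} C(k,j) · (n+k-j-1)!/(n+k+1)! and w_j^b = (-1)^j w_j^a. Consequently ∫_a^b H_n(f;x) dx = Σ_{j=0}^{n-1} w_j^a [f^{(j)}(a) + (-1)^j f^{(j)}(b)]. -/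
/-!
Write `H_n(f; ·)` as the sum of the two pieces `(x - q)^n Σ_{k<n} A_k (x - p)^k / k!`
attached to the nodes `(p, q) = (a, b)` and `(b, a)`. By Leibniz' rule each `A_k` is a combination
of `f^{(j)}(p)`, `j ≤ k`, and each monomial integrates to the Beta integral
`∫_p^q (x - p)^k (x - q)^n dx = (-1)^n k! n! / (k + n + 1)! · (q - p)^(k + n + 1)`.
Exchanging the sums over `k` and `j` produces the weight `w_j` of the node `p`. The piece at `b`
is the piece at `a` with `a` and `b` exchanged, and `w_j` changes sign when the orientation of
the interval is reversed, which gives `w_j^b = (-1)^j w_j^a`.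
-/

open Finset intervalIntegral

/-- Hermite quadrature weight at `a`:
`w_j^a = (b-a)^(j+1) * n * Σ_{k=j}^{n-1} C(k,j) (n+k-j-1)!/(n+k+1)!`. -/
noncomputable def wA (n : ℕ) (a b : ℝ) (j : ℕ) : ℝ :=
  (b - a) ^ (j + 1) * n * ∑ k ∈ Finset.Icc j (n - 1),
    (k.choose j : ℝ) * (Nat.factorial (n + k - j - 1)) / (Nat.factorial (n + k + 1))

/-- Hermite quadrature weight at `b`: `w_j^b = (-1)^j w_j^a`. -/
noncomputable def wB (n : ℕ) (a b : ℝ) (j : ℕ) : ℝ := (-1 : ℝ) ^ j * wA n a b j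

/-- RIBP weight at `a`:
`α_j^a = (-1)^(j+1) [ (a+c)^(j+1)/(j+1)! + Σ_{i=0}^{j-1} δ_{i+n-1-j} a^i/i! ]`. -/
noncomputable def alphaA (n : ℕ) (a c : ℝ) (δ : ℕ → ℝ) (j : ℕ) : ℝ :=
  (-1 : ℝ) ^ (j + 1) * ((a + c) ^ (j + 1) / (Nat.factorial (j + 1)) +
    ∑ i ∈ Finset.range j, δ (i + n - 1 - j) * a ^ i / (Nat.factorial i))

/-- RIBP weight at `b`:
`α_j^b = (-1)^j [ (b+c)^(j+1)/(j+1)! + Σ_{i=0}^{j-1} δ_{i+n-1-j} b^i/i! ]`. -/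
noncomputable def alphaB (n : ℕ) (b c : ℝ) (δ : ℕ → ℝ) (j : ℕ) : ℝ :=
  (-1 : ℝ) ^ j * ((b + c) ^ (j + 1) / (Nat.factorial (j + 1)) +
    ∑ i ∈ Finset.range j, δ (i + n - 1 - j) * b ^ i / (Nat.factorial i))

/-- Polynomial kernel `P(x,θ) = (x+c)^n/n! + Σ_{i=0}^{n-2} δ_i x^i/i!`. -/
noncomputable def Pker (n : ℕ) (c : ℝ) (δ : ℕ → ℝ) (x : ℝ) : ℝ :=
  (x + c) ^ n / (Nat.factorial n) + ∑ i ∈ Finset.range (n - 1), δ i * x ^ i / (Nat.factorial i)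

/-- Two-point Hermite interpolating polynomial
`H_n(f;x) = (x-a)^n Σ_{k<n} B_k (x-b)^k/k! + (x-b)^n Σ_{k<n} A_k (x-a)^k/k!`,
where `A_k = (d/dx)^k [f(x)/(x-b)^n]` at `x = a` and `B_k = (d/dx)^k [f(x)/(x-a)^n]` at `x = b`. -/
noncomputable def hermite (n : ℕ) (a b : ℝ) (f : ℝ → ℝ) (x : ℝ) : ℝ :=
  (x - a) ^ n * ∑ k ∈ Finset.range n,
      (iteratedDeriv k (fun t => f t / (t - a) ^ n) b) * (x - b) ^ k / (Nat.factorial k)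
  + (x - b) ^ n * ∑ k ∈ Finset.range n,
      (iteratedDeriv k (fun t => f t / (t - b) ^ n) a) * (x - a) ^ k / (Nat.factorial k)

open scoped Nat

section IteratedDeriv

variable {𝕜 : Type*} [NontriviallyNormedField 𝕜]

theorem iteratedDeriv_inv_sub_pow (q : 𝕜) (n m : ℕ) (p : 𝕜) :
    iteratedDeriv m (fun t => ((t - q) ^ n)⁻¹) p
      = (-1) ^ m * n.ascFactorial m * ((p - q) ^ (n + m))⁻¹ := by
  have hzpow (x : 𝕜) (l : ℕ) : (x ^ l)⁻¹ = x ^ (-(l : ℤ)) := by rw [zpow_neg, zpow_natCast]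
  simp only [hzpow]
  rw [iteratedDeriv_comp_sub_const (f := fun y => y ^ (-(n : ℤ))), iteratedDeriv_eq_iterate]
  beta_reduce
  rw [iter_deriv_zpow, Nat.ascFactorial_eq_prod_range, Finset.pow_eq_prod_const]
  push_cast
  rw [← prod_mul_distrib]
  exact congrArg₂ _ (prod_congr rfl fun i _ => by ring) (by ring_nf)

theorem iteratedDeriv_div_sub_pow {f : 𝕜 → 𝕜} {p q : 𝕜} (hpq : p ≠ q) {k : ℕ}
    (hf : ContDiffAt 𝕜 k f p) (n : ℕ) :
    iteratedDeriv k (fun t => f t / (t - q) ^ n) p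
      = ∑ i ∈ range (k + 1), (k.choose i : 𝕜) * iteratedDeriv i f p *
          ((-1) ^ (k - i) * n.ascFactorial (k - i) * ((p - q) ^ (n + (k - i)))⁻¹) := by
  have hpow : (p - q) ^ n ≠ 0 := pow_ne_zero n (sub_ne_zero.2 hpq)
  simp only [div_eq_mul_inv]
  rw [iteratedDeriv_fun_mul hf (by fun_prop (disch := exact hpow))]
  simp only [iteratedDeriv_inv_sub_pow]

end IteratedDeriv

theorem integral_sub_pow_mul_sub_pow_succ_right (p q : ℝ) (k n : ℕ) :
    (k + 1) * ∫ x in p..q, (x - p) ^ k * (x - q) ^ (n + 1)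
      = -((n + 1) * ∫ x in p..q, (x - p) ^ (k + 1) * (x - q) ^ n) := by
  have hparts := integral_deriv_mul_eq_sub (a := p) (b := q)
    (u := fun x => (x - p) ^ (k + 1)) (v := fun x => (x - q) ^ (n + 1))
    (u' := fun x => (k + 1) * (x - p) ^ k) (v' := fun x => (n + 1) * (x - q) ^ n)
    (fun x _ => by simpa using ((hasDerivAt_id x).sub_const p).fun_pow (k + 1))
    (fun x _ => by simpa using ((hasDerivAt_id x).sub_const q).fun_pow (n + 1))
    (by apply Continuous.intervalIntegrable; fun_prop)
    (by apply Continuous.intervalIntegrable; fun_prop)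
  rw [integral_add (by apply Continuous.intervalIntegrable; fun_prop)
    (by apply Continuous.intervalIntegrable; fun_prop)] at hparts
  simp only [sub_self, zero_pow (Nat.succ_ne_zero _), zero_mul, mul_zero, mul_assoc,
    mul_left_comm _ ((n : ℝ) + 1), integral_const_mul] at hparts
  linarith

theorem integral_sub_pow_mul_sub_pow (p q : ℝ) (n k : ℕ) :
    ∫ x in p..q, (x - p) ^ k * (x - q) ^ n
      = (-1) ^ n * (k ! * n ! / (k + n + 1)! : ℝ) * (q - p) ^ (k + n + 1) := by
  induction n generalizing k with
  | zero =>
    simp only [pow_zero, mul_one, integral_comp_sub_right (fun x => x ^ k), integral_pow, sub_self,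
      zero_pow (Nat.succ_ne_zero k), sub_zero, add_zero, Nat.factorial_succ, Nat.factorial_zero]
    push_cast
    field_simp
  | succ n ih =>
    have h := integral_sub_pow_mul_sub_pow_succ_right p q k n
    rw [ih] at h
    refine mul_left_cancel₀ (by positivity : (k : ℝ) + 1 ≠ 0) (h.trans ?_)
    rw [show k + 1 + n + 1 = k + (n + 1) + 1 by ring]
    push_cast [Nat.factorial_succ]
    ring

noncomputable def hermiteSummand (n : ℕ) (p q : ℝ) (f : ℝ → ℝ) (x : ℝ) : ℝ :=
  (x - q) ^ n * ∑ k ∈ range n, iteratedDeriv k (fun t => f t / (t - q) ^ n) p * (x - p) ^ k / k !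

theorem hermite_eq_hermiteSummand_add (n : ℕ) (a b : ℝ) (f : ℝ → ℝ) :
    hermite n a b f = fun x => hermiteSummand n b a f x + hermiteSummand n a b f x := rfl

theorem continuous_hermiteSummand (n : ℕ) (p q : ℝ) (f : ℝ → ℝ) :
    Continuous (hermiteSummand n p q f) := by
  unfold hermiteSummand; fun_prop

-- The left side is the coefficient of `f^{(j)}(p)` in the `k`-th term of
-- `∫_p^q hermiteSummand n p q f`.
theorem wA_term_eq {p q : ℝ} (hpq : p ≠ q) {n j k : ℕ} (hn : 0 < n) (hjk : j ≤ k) :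
    (k.choose j : ℝ) * ((-1) ^ (k - j) * n.ascFactorial (k - j) * ((p - q) ^ (n + (k - j)))⁻¹)
        / k ! * ((-1) ^ n * (k ! * n ! / (k + n + 1)! : ℝ) * (q - p) ^ (k + n + 1))
      = (q - p) ^ (j + 1) * n * (k.choose j * (n + k - j - 1)! / (n + k + 1)!) := by
  obtain ⟨d, rfl⟩ := Nat.exists_eq_add_of_le hjk
  have hqp : q - p ≠ 0 := sub_ne_zero.2 hpq.symm
  have hasc : (n - 1)! * n.ascFactorial d = (n + (j + d) - j - 1)! := by
    rw [Nat.factorial_mul_ascFactorial' n d hn]; congr 1; omega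
  have hfac : n ! = n * (n - 1)! := (Nat.mul_factorial_pred hn.ne').symm
  have hpow_pq : (p - q) ^ (n + d) = (-1) ^ (n + d) * (q - p) ^ (n + d) := by
    rw [← mul_pow]; ring
  have hpow_qp : (q - p) ^ (j + d + n + 1) = (q - p) ^ (n + d) * (q - p) ^ (j + 1) := by
    rw [← pow_add]; ring_nf
  rw [add_tsub_cancel_left, ← hasc, hfac, hpow_pq, hpow_qp,
    show j + d + n + 1 = n + (j + d) + 1 by ring]
  push_cast
  field_simp
  ring

theorem integral_hermiteSummand {f : ℝ → ℝ} {p q : ℝ} (hpq : p ≠ q) {n : ℕ}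
    (hf : ContDiffAt ℝ (n - 1 : ℕ) f p) :
    ∫ x in p..q, hermiteSummand n p q f x = ∑ j ∈ range n, wA n p q j * iteratedDeriv j f p := by
  have hexpand : hermiteSummand n p q f = fun x => ∑ k ∈ range n,
      iteratedDeriv k (fun t => f t / (t - q) ^ n) p / k ! * ((x - p) ^ k * (x - q) ^ n) := by
    ext x
    rw [hermiteSummand, mul_sum]
    exact sum_congr rfl fun k _ => by ring
  rw [hexpand, integral_finsetSum fun k _ => by apply Continuous.intervalIntegrable; fun_prop]
  simp only [integral_const_mul, integral_sub_pow_mul_sub_pow]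
  rw [sum_congr rfl fun k hk => by
    rw [iteratedDeriv_div_sub_pow hpq (hf.of_le (by have := mem_range.1 hk; norm_cast; omega)),
      sum_div, sum_mul]]
  rw [sum_comm' (t' := range n) (s' := fun j => Icc j (n - 1))
    (fun k j => by simp only [mem_range, mem_Icc]; omega)]
  refine sum_congr rfl fun j hj => ?_
  rw [wA, mul_sum, sum_mul]
  refine sum_congr rfl fun k hk => ?_
  rw [← wA_term_eq hpq (by have := mem_range.1 hj; omega) (mem_Icc.1 hk).1]
  ring

theorem wB_eq_neg_wA (n : ℕ) (a b : ℝ) (j : ℕ) : wB n a b j = -wA n b a j := by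
  rw [wB, wA, wA, show a - b = -1 * (b - a) by ring, mul_pow, pow_succ (-1 : ℝ)]
  ring

theorem stmt0_general (n : ℕ) (a b : ℝ) (hab : a < b) (f : ℝ → ℝ)
    (hf : ∃ U : Set ℝ, IsOpen U ∧ Set.Icc a b ⊆ U ∧ ContDiffOn ℝ ((n - 1 : ℕ) : ℕ∞) f U) :
    (∫ x in a..b, hermite n a b f x)
        = (∑ j ∈ Finset.range n, wA n a b j * iteratedDeriv j f a)
          + (∑ j ∈ Finset.range n, wB n a b j * iteratedDeriv j f b)
    ∧ (∫ x in a..b, hermite n a b f x)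
        = ∑ j ∈ Finset.range n,
            wA n a b j * (iteratedDeriv j f a + (-1 : ℝ) ^ j * iteratedDeriv j f b) := by
  obtain ⟨U, hU, hIcc, hfU⟩ := hf
  have hfa := hfU.contDiffAt (hU.mem_nhds (hIcc ⟨le_rfl, hab.le⟩))
  have hfb := hfU.contDiffAt (hU.mem_nhds (hIcc ⟨hab.le, le_rfl⟩))
  have hint : ∫ x in a..b, hermite n a b f x
      = (∑ j ∈ range n, wA n a b j * iteratedDeriv j f a)
        + ∑ j ∈ range n, wB n a b j * iteratedDeriv j f b := by
    rw [hermite_eq_hermiteSummand_add,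
      integral_add ((continuous_hermiteSummand ..).intervalIntegrable _ _)
        ((continuous_hermiteSummand ..).intervalIntegrable _ _),
      integral_symm b, integral_hermiteSummand hab.ne' hfb, integral_hermiteSummand hab.ne hfa,
      add_comm]
    simp only [wB_eq_neg_wA, neg_mul, sum_neg_distrib]
  refine ⟨hint, hint.trans ?_⟩
  rw [← sum_add_distrib]
  exact sum_congr rfl fun j _ => by rw [wB]; ring

/-- the integral of the two-point Hermite interpolating polynomial is
`Σ_j w_j^a f⁽ʲ⁾(a) + Σ_j w_j^b f⁽ʲ⁾(b)`, and consequently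
`Σ_j w_j^a [f⁽ʲ⁾(a) + (-1)^j f⁽ʲ⁾(b)]`. -/
theorem stmt0 (n : ℕ) (hn : 1 ≤ n) (a b : ℝ) (hab : a < b) (f : ℝ → ℝ)
    (hf : ∃ U : Set ℝ, IsOpen U ∧ Set.Icc a b ⊆ U ∧ ContDiffOn ℝ ((n - 1 : ℕ) : ℕ∞) f U) :
    (∫ x in a..b, hermite n a b f x)
        = (∑ j ∈ Finset.range n, wA n a b j * iteratedDeriv j f a)
          + (∑ j ∈ Finset.range n, wB n a b j * iteratedDeriv j f b)
    ∧ (∫ x in a..b, hermite n a b f x)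
        = ∑ j ∈ Finset.range n,
            wA n a b j * (iteratedDeriv j f a + (-1 : ℝ) ^ j * iteratedDeriv j f b) :=
  stmt0_general n a b hab f hf
end

section
/- Let n ≥ 1 be an integer, let a < b be real numbers, and let θ = (c, δ_0, …, δ_{n-2}) be arbitrary real parameters. Then for every f : ℝ → ℝ that is n-times continuously differentiable on [a,b], the n-fold reverse integration by parts identity holds: ∫_a^b f(x) dx = Σ_{j=0}^{n-1} α_j^b f^{(j)}(b) + Σ_{j=0}^{n-1} α_j^a f^{(j)}(a) + ∫_a^b (-1)^n f^{(n)}(x) P(x,θ) dx. -/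
/-!
The functions `Q_m = P^{(m)}` (`pkerDeriv n c δ m`) form a chain with `Q_0 = P`, `Q_m' = Q_{m+1}`
and `Q_n = 1`. Integrating `f · Q_n` by parts `n` times along this chain moves all `n`
derivatives onto `f`, and the boundary term of the `j`-th step is `f^{(j)} Q_{n-1-j}` at the
endpoints; up to sign, `Q_{n-1-j}(b)` and `Q_{n-1-j}(a)` are the weights `α_j^b` and `α_j^a`.
-/

open Finset intervalIntegral

section IteratedByParts

variable {a b : ℝ} {u v : ℕ → ℝ → ℝ}

theorem integral_mul_eq_sum_add_integral_mul (n : ℕ)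
    (hu : ∀ k < n, ∀ x ∈ Set.uIcc a b, HasDerivWithinAt (u k) (u (k + 1) x) (Set.uIcc a b) x)
    (hv : ∀ k < n, ∀ x ∈ Set.uIcc a b, HasDerivWithinAt (v (k + 1)) (v k x) (Set.uIcc a b) x)
    (hu_int : ∀ k ≤ n, IntervalIntegrable (u k) MeasureTheory.volume a b)
    (hv_int : ∀ k ≤ n, IntervalIntegrable (v k) MeasureTheory.volume a b) :
    ∫ x in a..b, u 0 x * v 0 x
      = (∑ j ∈ range n, (-1 : ℝ) ^ j * (u j b * v (j + 1) b - u j a * v (j + 1) a))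
        + (-1 : ℝ) ^ n * ∫ x in a..b, u n x * v n x := by
  induction n with
  | zero => simp
  | succ n ih =>
    have by_parts : ∫ x in a..b, u n x * v n x
        = u n b * v (n + 1) b - u n a * v (n + 1) a - ∫ x in a..b, u (n + 1) x * v (n + 1) x :=
      integral_mul_deriv_eq_deriv_mul_of_hasDerivWithinAt (hu n n.lt_succ_self)
        (hv n n.lt_succ_self) (hu_int _ le_rfl) (hv_int n n.le_succ)
    rw [ih (fun k hk => hu k (by omega)) (fun k hk => hv k (by omega))
      (fun k hk => hu_int k (by omega)) (fun k hk => hv_int k (by omega)),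
      by_parts, sum_range_succ]
    ring

end IteratedByParts

theorem ContDiffOn.hasDerivWithinAt_iteratedDerivWithin {s : Set ℝ} {f : ℝ → ℝ} {n : ℕ∞}
    {k : ℕ} (hf : ContDiffOn ℝ n f s) (hs : UniqueDiffOn ℝ s) (hk : (k : ℕ∞) < n)
    {x : ℝ} (hx : x ∈ s) :
    HasDerivWithinAt (iteratedDerivWithin k f s) (iteratedDerivWithin (k + 1) f s x) s x := by
  rw [iteratedDerivWithin_succ]
  exact (hf.differentiableOn_iteratedDerivWithin (by exact_mod_cast hk) hs x hx).hasDerivWithinAt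

theorem hasDerivAt_add_pow_div_factorial (c : ℝ) (k : ℕ) (x : ℝ) :
    HasDerivAt (fun x : ℝ => (x + c) ^ (k + 1) / (k + 1).factorial)
      ((x + c) ^ k / k.factorial) x := by
  refine ((((hasDerivAt_id x).add_const c).pow (k + 1)).div_const
    ((k + 1).factorial : ℝ)).congr_deriv ?_
  rw [Nat.factorial_succ]
  push_cast
  field_simp
  simp

theorem hasDerivAt_sum_range_mul_pow_div_factorial (d : ℕ → ℝ) (N : ℕ) (x : ℝ) :
    HasDerivAt (fun x : ℝ => ∑ i ∈ range N, d i * x ^ i / i.factorial)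
      (∑ i ∈ range (N - 1), d (i + 1) * x ^ i / i.factorial) x := by
  cases N with
  | zero => simpa using hasDerivAt_const (c := (0 : ℝ)) x
  | succ N =>
    simp_rw [sum_range_succ' _ N, Nat.add_sub_cancel, pow_zero]
    apply HasDerivAt.add_const
    refine HasDerivAt.fun_sum fun i _ => ?_
    refine (((hasDerivAt_pow (i + 1) x).const_mul (d (i + 1))).div_const
      ((i + 1).factorial : ℝ)).congr_deriv ?_
    rw [Nat.factorial_succ]
    push_cast
    field_simp

noncomputable def pkerDeriv (n : ℕ) (c : ℝ) (δ : ℕ → ℝ) (m : ℕ) (x : ℝ) : ℝ :=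
  (x + c) ^ (n - m) / (n - m).factorial +
    ∑ i ∈ range (n - 1 - m), δ (i + m) * x ^ i / i.factorial

section pkerDeriv

variable (n : ℕ) (c : ℝ) (δ : ℕ → ℝ)

theorem pkerDeriv_zero : pkerDeriv n c δ 0 = Pker n c δ := rfl

theorem pkerDeriv_self (x : ℝ) : pkerDeriv n c δ n x = 1 := by
  simp [pkerDeriv, show n - 1 - n = 0 by omega]

theorem continuous_pkerDeriv (m : ℕ) : Continuous (pkerDeriv n c δ m) := by
  unfold pkerDeriv; fun_prop

theorem hasDerivAt_pkerDeriv {m : ℕ} (hm : m < n) (x : ℝ) :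
    HasDerivAt (pkerDeriv n c δ m) (pkerDeriv n c δ (m + 1) x) x := by
  have hpow := hasDerivAt_add_pow_div_factorial c (n - (m + 1)) x
  have hsum := hasDerivAt_sum_range_mul_pow_div_factorial (fun i => δ (i + m)) (n - 1 - m) x
  rw [show n - (m + 1) + 1 = n - m by omega] at hpow
  rw [show n - 1 - m - 1 = n - 1 - (m + 1) by omega] at hsum
  simp only [add_right_comm _ 1 m, add_assoc _ m 1] at hsum
  exact hpow.add hsum

theorem pkerDeriv_sub_succ {j : ℕ} (hj : j < n) (x : ℝ) :
    pkerDeriv n c δ (n - (j + 1)) x = (x + c) ^ (j + 1) / (j + 1).factorial +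
      ∑ i ∈ range j, δ (i + n - 1 - j) * x ^ i / i.factorial := by
  rw [pkerDeriv, show n - (n - (j + 1)) = j + 1 by omega,
    show n - 1 - (n - (j + 1)) = j by omega]
  congr 1
  refine sum_congr rfl fun i _ => ?_
  rw [show i + (n - (j + 1)) = i + n - 1 - j by omega]

theorem alphaB_eq (j : ℕ) (hj : j < n) (b : ℝ) :
    alphaB n b c δ j = (-1) ^ j * pkerDeriv n c δ (n - (j + 1)) b := by
  rw [alphaB, pkerDeriv_sub_succ n c δ hj]

theorem alphaA_eq (j : ℕ) (hj : j < n) (a : ℝ) :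
    alphaA n a c δ j = -((-1) ^ j * pkerDeriv n c δ (n - (j + 1)) a) := by
  rw [alphaA, pkerDeriv_sub_succ n c δ hj, pow_succ]
  ring

end pkerDeriv

theorem stmt2_general (n : ℕ) (a b : ℝ) (hab : a < b) (c : ℝ) (δ : ℕ → ℝ)
    (f : ℝ → ℝ) (hf : ContDiffOn ℝ (n : ℕ∞) f (Set.Icc a b)) :
    ∫ x in a..b, f x
      = (∑ j ∈ Finset.range n, alphaB n b c δ j * iteratedDerivWithin j f (Set.Icc a b) b)
        + (∑ j ∈ Finset.range n, alphaA n a c δ j * iteratedDerivWithin j f (Set.Icc a b) a)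
        + ∫ x in a..b, (-1 : ℝ) ^ n * iteratedDerivWithin n f (Set.Icc a b) x * Pker n c δ x := by
  set s := Set.Icc a b
  have hs : UniqueDiffOn ℝ s := uniqueDiffOn_Icc hab
  have hs_eq : Set.uIcc a b = s := Set.uIcc_of_le hab.le
  have hf_deriv : ∀ k < n, ∀ x ∈ Set.uIcc a b, HasDerivWithinAt (iteratedDerivWithin k f s)
      (iteratedDerivWithin (k + 1) f s x) (Set.uIcc a b) x := by
    rw [hs_eq]
    exact fun k hk x hx => hf.hasDerivWithinAt_iteratedDerivWithin hs (by exact_mod_cast hk) hx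
  have hP_deriv : ∀ k < n, ∀ x ∈ Set.uIcc a b,
      HasDerivWithinAt (pkerDeriv n c δ (n - (k + 1))) (pkerDeriv n c δ (n - k) x)
        (Set.uIcc a b) x := fun k hk x _ => by
    simpa [show n - (k + 1) + 1 = n - k by omega] using
      (hasDerivAt_pkerDeriv n c δ (m := n - (k + 1)) (by omega) x).hasDerivWithinAt
  have hf_int : ∀ k ≤ n,
      IntervalIntegrable (iteratedDerivWithin k f s) MeasureTheory.volume a b := fun k hk =>
    (hf.continuousOn_iteratedDerivWithin (by exact_mod_cast hk) hs).intervalIntegrable_of_Icc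
      hab.le
  have key := integral_mul_eq_sum_add_integral_mul n hf_deriv hP_deriv hf_int
    fun k _ => (continuous_pkerDeriv n c δ _).intervalIntegrable a b
  simp only [iteratedDerivWithin_zero, Nat.sub_zero, pkerDeriv_self, mul_one, Nat.sub_self,
    pkerDeriv_zero] at key
  rw [key, ← integral_const_mul, ← sum_add_distrib]
  congr 1
  · refine sum_congr rfl fun j hj => ?_
    rw [alphaB_eq n c δ j (mem_range.mp hj), alphaA_eq n c δ j (mem_range.mp hj)]
    ring
  · simp only [mul_assoc]

/-- the `n`-fold reverse-integration-by-parts identity. -/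
theorem stmt2 (n : ℕ) (hn : 1 ≤ n) (a b : ℝ) (hab : a < b) (c : ℝ) (δ : ℕ → ℝ)
    (f : ℝ → ℝ) (hf : ContDiffOn ℝ (n : ℕ∞) f (Set.Icc a b)) :
    ∫ x in a..b, f x
      = (∑ j ∈ Finset.range n, alphaB n b c δ j * iteratedDerivWithin j f (Set.Icc a b) b)
        + (∑ j ∈ Finset.range n, alphaA n a c δ j * iteratedDerivWithin j f (Set.Icc a b) a)
        + ∫ x in a..b, (-1 : ℝ) ^ n * iteratedDerivWithin n f (Set.Icc a b) x * Pker n c δ x :=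
  stmt2_general n a b hab c δ f hf
end

section
/- Let n ≥ 1 be an integer, let a < b be real numbers, and let θ = (c, δ_0, …, δ_{n-2}) be real parameters. Then α_j^a = w_j^a for all j = 0, …, n-1 if and only if α_j^b = w_j^b for all j = 0, …, n-1. -/
/-!
Write `E x = e^{xX} = ∑ x^k X^k / k!`. There is a power series `Γ` with constant term `1` such
that the coefficient of `X^(j+1)` in `Γ * E x` is `P^(n-1-j)(x)`, and `α_j^a`, `α_j^b` are these
values at `a`, `b` up to the signs `(-1)^(j+1)`, `(-1)^j`. Writing `w_j^a = (b-a)^(j+1) W_j`, with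
the closed form `W_j = C(2n-j-1, n) / (C(2n, n) (j+1)!)` obtained by telescoping, both conditions
take the same shape: `coeff (j+1) (Γ * E x) = (x - y)^(j+1) W_j` for all `j < n`, with
`(x, y) = (a, b)` on one side and `(b, a)` on the other. Since `E y = E x * E (y - x)`, the
coefficients at `y` are determined by those at `x`, and the condition passes from `x` to `y`
because `W_j + ∑_{m ≤ j} (-1)^m W_m / (j-m)! = 1/(j+1)!`, which is the exactness of the
Hermite rule on `(t - a)^j`. After clearing denominators this is a `(j+1)`-st forward difference
of `k ↦ C(k, n)`.
-/

open Finset intervalIntegral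

theorem sum_range_neg_one_pow_mul_choose_mul_add_choose (p q y : ℕ) :
    ∑ k ∈ range p, (-1 : ℝ) ^ (p - 1 - k) * p.choose k * (y + k).choose (p + q) =
      (y + p).choose (p + q) - y.choose q := by
  have h := fwdDiff_iter_eq_sum_shift 1 (fun x ↦ (x.choose (p + q) : ℤ)) p y
  rw [fwdDiff_iter_choose, sum_range_succ] at h
  have hsign : ∀ k ∈ range p, (-1 : ℤ) ^ (p - k) = -(-1) ^ (p - 1 - k) := fun k hk ↦ by
    rw [show p - k = p - 1 - k + 1 by simp at hk; omega, pow_succ, mul_neg_one]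
  have hR := congrArg (Int.cast : ℤ → ℝ) h
  simp +contextual [hsign] at hR
  linarith

theorem mul_sum_range_choose_mul_factorial_div_factorial (j d K : ℕ) :
    ((j + 1 + d : ℕ) : ℝ) * ∑ k ∈ range K,
        (k.choose j : ℝ) * (d + k).factorial / (j + d + k + 2).factorial =
      (K.choose (j + 1) : ℝ) * (d + K).factorial / (j + d + K + 1).factorial := by
  induction K with
  | zero => simp
  | succ K ih =>
    have hpascal : ((K + 1).choose (j + 1) : ℝ) = K.choose j + K.choose (j + 1) := by
      exact_mod_cast Nat.choose_succ_succ K j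
    have habsorb : ((K + 1 : ℕ) : ℝ) * K.choose j = (K + 1).choose (j + 1) * (j + 1 : ℕ) := by
      exact_mod_cast Nat.add_one_mul_choose_eq K j
    rw [sum_range_succ, mul_add, ih, show d + (K + 1) = d + K + 1 by ring,
      show j + d + (K + 1) + 1 = j + d + K + 1 + 1 by ring,
      show j + d + K + 2 = j + d + K + 1 + 1 by ring,
      Nat.factorial_succ (d + K), Nat.factorial_succ (j + d + K + 1)]
    push_cast at habsorb ⊢
    field_simp
    linear_combination (-(d + K + j + 2 : ℝ)) * hpascal - habsorb

noncomputable def hermiteWeight (n j : ℕ) : ℝ :=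
  ((2 * n - j - 1).choose n : ℝ) / ((2 * n).choose n * (j + 1).factorial)

theorem wA_eq_mul_hermiteWeight {n j : ℕ} (hj : j < n) (a b : ℝ) :
    wA n a b j = (b - a) ^ (j + 1) * hermiteWeight n j := by
  obtain ⟨d, rfl⟩ : ∃ d, n = j + 1 + d := ⟨n - j - 1, by omega⟩
  have hsum : ∑ k ∈ Icc j (j + 1 + d - 1),
        (k.choose j : ℝ) * (j + 1 + d + k - j - 1).factorial / (j + 1 + d + k + 1).factorial =
      ∑ k ∈ range (j + 1 + d),
        (k.choose j : ℝ) * (d + k).factorial / (j + d + k + 2).factorial := by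
    rw [sum_subset (s₂ := range (j + 1 + d)) (fun k hk ↦ by simp at hk ⊢; omega)
      fun k hk hk' ↦ by simp at hk hk'; simp [Nat.choose_eq_zero_of_lt (show k < j by omega)]]
    refine sum_congr rfl fun k _ ↦ ?_
    rw [show j + 1 + d + k - j - 1 = d + k by omega,
      show j + 1 + d + k + 1 = j + d + k + 2 by omega]
  rw [wA, mul_assoc, hsum, mul_sum_range_choose_mul_factorial_div_factorial, hermiteWeight,
    show 2 * (j + 1 + d) - j - 1 = (j + 1 + d) + d by omega,
    show 2 * (j + 1 + d) = (j + 1 + d) + (j + 1 + d) by omega,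
    show d + (j + 1 + d) = (j + 1 + d) + d by omega,
    show j + d + (j + 1 + d) + 1 = (j + 1 + d) + (j + 1 + d) by omega,
    Nat.cast_add_choose, Nat.cast_add_choose, Nat.cast_add_choose]
  field_simp

-- Exactness of the Hermite rule on `(t - a)^j / j!` over `[a, a + 1]`.
theorem hermiteWeight_add_sum_antidiagonal {n j : ℕ} (hj : j < n) :
    hermiteWeight n j +
        ∑ p ∈ antidiagonal j, (-1 : ℝ) ^ p.1 * hermiteWeight n p.1 / (p.2.factorial : ℝ) =
      1 / (j + 1).factorial := by
  obtain ⟨d, rfl⟩ : ∃ d, n = j + 1 + d := ⟨n - j - 1, by omega⟩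
  set y := j + 1 + 2 * d
  have hdiff := sum_range_neg_one_pow_mul_choose_mul_add_choose (j + 1) d y
  rw [Nat.add_sub_cancel, show y + (j + 1) = 2 * (j + 1 + d) by omega,
    Nat.choose_symm_of_eq_add (show y = d + (j + 1 + d) by omega)] at hdiff
  have hterm : ∀ k ∈ range (j + 1), (-1 : ℝ) ^ (j - k) * hermiteWeight (j + 1 + d) (j - k) /
        k.factorial = (-1 : ℝ) ^ (j - k) * (j + 1).choose k * (y + k).choose (j + 1 + d) /
          ((2 * (j + 1 + d)).choose (j + 1 + d) * (j + 1).factorial) := by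
    intro k hk
    have hkj : k ≤ j := by simp at hk; omega
    rw [hermiteWeight, show 2 * (j + 1 + d) - (j - k) - 1 = y + k by omega,
      Nat.cast_choose ℝ (show k ≤ j + 1 by omega), show j + 1 - k = j - k + 1 by omega]
    field_simp
  rw [← Nat.sum_antidiagonal_swap]
  simp only [Prod.fst_swap, Prod.snd_swap]
  rw [Nat.sum_antidiagonal_eq_sum_range_succ
      (fun r m ↦ (-1 : ℝ) ^ m * hermiteWeight (j + 1 + d) m / r.factorial) j,
    sum_congr rfl hterm, ← sum_div, hdiff, hermiteWeight,
    show 2 * (j + 1 + d) - j - 1 = y by omega]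
  have hcentral : ((2 * (j + 1 + d)).choose (j + 1 + d) : ℝ) ≠ 0 := by
    exact_mod_cast (Nat.choose_pos (by omega)).ne'
  field_simp
  ring

open PowerSeries

theorem coeff_rescale_exp (x : ℝ) (k : ℕ) :
    coeff k (rescale x (exp ℝ)) = x ^ k / k.factorial := by
  simp [coeff_exp, div_eq_mul_inv]

theorem constantCoeff_rescale_exp (x : ℝ) : constantCoeff (rescale x (exp ℝ)) = 1 := by
  simp [← coeff_zero_eq_constantCoeff_apply]

def MatchesHermiteWeights (Γ : ℝ⟦X⟧) (n : ℕ) (x y : ℝ) : Prop :=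
  ∀ j < n, coeff (j + 1) (Γ * rescale x (exp ℝ)) = (x - y) ^ (j + 1) * hermiteWeight n j

theorem MatchesHermiteWeights.symm {Γ : ℝ⟦X⟧} (hΓ : constantCoeff Γ = 1) {n : ℕ} {x y : ℝ}
    (h : MatchesHermiteWeights Γ n x y) : MatchesHermiteWeights Γ n y x := by
  intro j hj
  have hshift : rescale y (exp ℝ) = rescale x (exp ℝ) * rescale (y - x) (exp ℝ) := by
    rw [exp_mul_exp_eq_exp_add, add_sub_cancel]
  have hsum : ∑ p ∈ antidiagonal j,
        coeff (p.1 + 1) (Γ * rescale x (exp ℝ)) * coeff p.2 (rescale (y - x) (exp ℝ)) =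
      -(y - x) ^ (j + 1) *
        ∑ p ∈ antidiagonal j, (-1 : ℝ) ^ p.1 * hermiteWeight n p.1 / (p.2.factorial : ℝ) := by
    rw [mul_sum]
    refine sum_congr rfl fun p hp ↦ ?_
    rw [HasAntidiagonal.mem_antidiagonal] at hp
    rw [h p.1 (by omega), coeff_rescale_exp, ← hp, ← neg_sub y x, neg_pow]
    ring
  have hconst : coeff 0 (Γ * rescale x (exp ℝ)) = 1 := by
    simp [hΓ, constantCoeff_rescale_exp]
  rw [hshift, ← mul_assoc, coeff_mul, Nat.sum_antidiagonal_succ, hsum, hconst, coeff_rescale_exp]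
  linear_combination (-(y - x) ^ (j + 1)) * hermiteWeight_add_sum_antidiagonal hj

-- Its product with `rescale x (exp ℝ) = e^{xX}` has, as coefficient `j + 1` (for `j < n`), the
-- derivative of order `n - 1 - j` of `Pker n c δ` at `x`.
noncomputable def ribpSeries (n : ℕ) (c : ℝ) (δ : ℕ → ℝ) : ℝ⟦X⟧ :=
  rescale c (exp ℝ) + mk fun t ↦ if 2 ≤ t then δ (n - t) else 0

theorem constantCoeff_ribpSeries (n : ℕ) (c : ℝ) (δ : ℕ → ℝ) :
    constantCoeff (ribpSeries n c δ) = 1 := by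
  rw [ribpSeries, map_add, constantCoeff_rescale_exp, ← coeff_zero_eq_constantCoeff_apply, coeff_mk]
  simp

theorem coeff_succ_ribpSeries_mul_rescale_exp {n j : ℕ} (hj : j < n) (c : ℝ) (δ : ℕ → ℝ)
    (x : ℝ) : coeff (j + 1) (ribpSeries n c δ * rescale x (exp ℝ)) =
      (x + c) ^ (j + 1) / (j + 1).factorial +
        ∑ i ∈ range j, δ (i + n - 1 - j) * x ^ i / i.factorial := by
  rw [ribpSeries, add_mul, map_add, exp_mul_exp_eq_exp_add, coeff_rescale_exp, add_comm c x,
    coeff_mul, ← Nat.sum_antidiagonal_swap]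
  simp only [Prod.fst_swap, Prod.snd_swap]
  rw [Nat.sum_antidiagonal_eq_sum_range_succ
      (fun i t ↦ coeff t (mk fun t ↦ if 2 ≤ t then δ (n - t) else 0) *
        coeff i (rescale x (exp ℝ))) (j + 1),
    sum_range_succ, sum_range_succ]
  simp only [coeff_mk, coeff_rescale_exp]
  rw [Nat.sub_self, show j + 1 - j = 1 by omega]
  simp only [show ¬ 2 ≤ 0 by omega, show ¬ 2 ≤ 1 by omega, if_false, zero_mul, add_zero]
  congr 1
  refine sum_congr rfl fun i hi ↦ ?_
  simp only [mem_range] at hi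
  rw [if_pos (by omega), show n - (j + 1 - i) = i + n - 1 - j by omega, mul_div_assoc]

theorem alphaA_eq_wA_iff {n j : ℕ} (hj : j < n) (a b c : ℝ) (δ : ℕ → ℝ) :
    alphaA n a c δ j = wA n a b j ↔
      coeff (j + 1) (ribpSeries n c δ * rescale a (exp ℝ)) =
        (a - b) ^ (j + 1) * hermiteWeight n j := by
  have hsign : (a - b) ^ (j + 1) = (-1) ^ (j + 1) * (b - a) ^ (j + 1) := by
    rw [← neg_sub b a, neg_pow]
  rw [alphaA, wA_eq_mul_hermiteWeight hj, coeff_succ_ribpSeries_mul_rescale_exp hj, hsign,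
    mul_assoc]
  rcases neg_one_pow_eq_or ℝ (j + 1) with h | h <;> rw [h] <;> constructor <;> intro <;> linarith

theorem alphaB_eq_wB_iff {n j : ℕ} (hj : j < n) (a b c : ℝ) (δ : ℕ → ℝ) :
    alphaB n b c δ j = wB n a b j ↔
      coeff (j + 1) (ribpSeries n c δ * rescale b (exp ℝ)) =
        (b - a) ^ (j + 1) * hermiteWeight n j := by
  rw [alphaB, wB, wA_eq_mul_hermiteWeight hj, coeff_succ_ribpSeries_mul_rescale_exp hj]
  exact mul_right_inj' (pow_ne_zero j (by norm_num))

theorem stmt4_general (n : ℕ) (a b : ℝ) (c : ℝ) (δ : ℕ → ℝ) :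
    (∀ j < n, alphaA n a c δ j = wA n a b j) ↔ (∀ j < n, alphaB n b c δ j = wB n a b j) := by
  have hA : (∀ j < n, alphaA n a c δ j = wA n a b j) ↔
      MatchesHermiteWeights (ribpSeries n c δ) n a b :=
    forall₂_congr fun _ hj ↦ alphaA_eq_wA_iff hj a b c δ
  have hB : (∀ j < n, alphaB n b c δ j = wB n a b j) ↔
      MatchesHermiteWeights (ribpSeries n c δ) n b a :=
    forall₂_congr fun _ hj ↦ alphaB_eq_wB_iff hj a b c δ
  have hΓ := constantCoeff_ribpSeries n c δ
  rw [hA, hB]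
  exact ⟨MatchesHermiteWeights.symm hΓ, MatchesHermiteWeights.symm hΓ⟩

/-- Redundancy theorem: `α_j^a = w_j^a` for all `j < n` iff
`α_j^b = w_j^b` for all `j < n`. -/
theorem stmt4 (n : ℕ) (hn : 1 ≤ n) (a b : ℝ) (hab : a < b) (c : ℝ) (δ : ℕ → ℝ) :
    (∀ j < n, alphaA n a c δ j = wA n a b j) ↔ (∀ j < n, alphaB n b c δ j = wB n a b j) :=
  stmt4_general n a b c δ
end

section
/- Let n ≥ 1 be an integer, let a < b be real numbers, and suppose the real parameters θ = (c, δ_0, …, δ_{n-2}) satisfy α_j^a = w_j^a for all j = 0, …, n-1. Then the polynomial kernel P(·,θ) is orthogonal to all polynomials of degree at most n-1 on [a,b]: ∫_a^b f(x) P(x,θ) dx = 0 for every polynomial f of degree ≤ n-1. -/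
open Finset intervalIntegral

/-! The hypotheses fix the derivatives of `P` at `a` of orders `< n`, since
`α_j^a = (-1)^(j+1) P^(n-1-j)(a)`. The Hermite weights have the closed form
`w_j^a = (b-a)^(j+1) C(n,j+1) (2n-1-j)!/(2n)!` (the defining sum telescopes), and with it these
prescribed values are exactly the derivatives at `a` of the Rodrigues polynomial
`D^n[(x-a)^n (x-b)^n]/(2n)!`, whose leading term `x^n/n!` is also that of `P`. Hence `P` is
this shifted Legendre polynomial, and `n` integrations by parts against `f` leave no boundary
terms because `(x-a)^n (x-b)^n` vanishes to order `n` at both ends. -/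

open Polynomial Nat

section Telescope

variable {K : Type*} [Field K] [CharZero K]

/- With `k = j + i` and `n = p + 1`, `n` times the summand of `wA` is the forward difference of
`C(j+i, j+1) (p+i)! / (p+j+i+1)!`. -/
theorem choose_mul_factorial_telescope (p j i : ℕ) :
    ((j + i + 1).choose (j + 1) : K) * (p + i + 1)! / (p + j + i + 2)!
      - ((j + i).choose (j + 1) : K) * (p + i)! / (p + j + i + 1)!
      = (p + 1) * ((j + i).choose j * (p + i)! / (p + j + i + 2)!) := by
  have hpascal : ((j + i + 1).choose (j + 1) : K) = (j + i).choose j + (j + i).choose (j + 1) := by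
    exact_mod_cast Nat.choose_succ_succ' (j + i) j
  have hsucc : ((j + i).choose (j + 1) : K) * (j + 1) = (j + i).choose j * i := by
    have := Nat.choose_succ_right_eq (j + i) j
    rw [show j + i - j = i by omega] at this
    exact_mod_cast this
  rw [hpascal, show p + i + 1 = (p + i).succ from rfl,
    show p + j + i + 2 = (p + j + i + 1).succ from rfl, factorial_succ, factorial_succ]
  have hpos : ((p + j + i + 1 + 1 : ℕ) : K) ≠ 0 := Nat.cast_ne_zero.mpr (by omega)
  have hfact : ((p + j + i + 1)! : K) ≠ 0 := Nat.cast_ne_zero.mpr (factorial_ne_zero _)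
  push_cast at hpos ⊢
  field_simp
  linear_combination -((p + i)! : K) * hsucc

theorem mul_sum_range_choose_mul_factorial_div_factorial_s5 (p j m : ℕ) :
    (p + 1 : K) * ∑ i ∈ range m, ((j + i).choose j * (p + i)! / (p + j + i + 2)! : K)
      = (j + m).choose (j + 1) * (p + m)! / (p + j + m + 1)! := by
  induction m with
  | zero => simp
  | succ m ih =>
    rw [sum_range_succ, mul_add, ih, ← choose_mul_factorial_telescope, add_sub_cancel,
      show p + j + (m + 1) + 1 = p + j + m + 2 by omega]
    rfl

end Telescope

theorem wA_eq_of_lt {n j : ℕ} (a b : ℝ) (hj : j < n) :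
    wA n a b j = (b - a) ^ (j + 1) * (n.choose (j + 1) * (2 * n - 1 - j)! / (2 * n)!) := by
  obtain ⟨m, rfl⟩ : ∃ m, n = j + m + 1 := ⟨n - j - 1, by omega⟩
  have key := mul_sum_range_choose_mul_factorial_div_factorial_s5 (K := ℝ) (j + m) j (m + 1)
  rw [wA, Nat.add_sub_cancel, ← Ico_add_one_right_eq_Icc, sum_Ico_eq_sum_range,
    show j + m + 1 - j = m + 1 by omega]
  rw [show 2 * (j + m + 1) - 1 - j = j + m + (m + 1) by omega,
    show 2 * (j + m + 1) = j + m + j + (m + 1) + 1 by omega, add_assoc j m 1, ← key, mul_assoc]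
  congr 2
  · push_cast; ring
  · refine sum_congr rfl fun i _ => ?_
    rw [show j + (m + 1) + (j + i) - j - 1 = j + m + i by omega,
      show j + (m + 1) + (j + i) + 1 = j + m + j + i + 2 by omega]

theorem eval_iterate_derivative_eq_factorial_mul_coeff_taylor {R : Type*} [CommSemiring R]
    (p : R[X]) (r : R) (k : ℕ) : (derivative^[k] p).eval r = k ! * (taylor r p).coeff k := by
  rw [taylor_coeff, ← factorial_smul_hasseDeriv, LinearMap.smul_apply, eval_smul, nsmul_eq_mul]

theorem eq_of_forall_eval_iterate_derivative_eq {R : Type*} [CommRing R] [IsDomain R] [CharZero R]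
    {p q : R[X]} (r : R) (h : ∀ k, (derivative^[k] p).eval r = (derivative^[k] q).eval r) :
    p = q := by
  refine taylor_injective r (ext fun k => ?_)
  have := h k
  rw [eval_iterate_derivative_eq_factorial_mul_coeff_taylor,
    eval_iterate_derivative_eq_factorial_mul_coeff_taylor] at this
  exact mul_left_cancel₀ (by exact_mod_cast k.factorial_ne_zero) this

theorem eval_iterate_derivative_pow_mul_pow {R : Type*} [CommRing R] (a b : R) (n k : ℕ) :
    (derivative^[n + k] ((X - C a) ^ n * (X - C b) ^ n)).eval a
      = (n + k)! * ((a - b) ^ (n - k) * n.choose k) := by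
  have : taylor a ((X - C a) ^ n * (X - C b) ^ n) = X ^ n * (X + C (a - b)) ^ n := by
    simp only [taylor_mul, taylor_pow, map_sub, taylor_X, taylor_C]
    ring
  rw [eval_iterate_derivative_eq_factorial_mul_coeff_taylor, this, coeff_X_pow_mul',
    if_pos (by omega), Nat.add_sub_cancel_left, coeff_X_add_C_pow]

noncomputable def pkerPoly (n : ℕ) (c : ℝ) (δ : ℕ → ℝ) : ℝ[X] :=
  C (n ! : ℝ)⁻¹ * (X + C c) ^ n + ∑ i ∈ range (n - 1), C (δ i / i !) * X ^ i

theorem eval_pkerPoly (n : ℕ) (c : ℝ) (δ : ℕ → ℝ) (x : ℝ) :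
    (pkerPoly n c δ).eval x = Pker n c δ x := by
  simp only [pkerPoly, Pker, eval_add, eval_mul, eval_C, eval_pow, eval_X, eval_finsetSum]
  rw [div_eq_inv_mul]
  congr 1
  exact sum_congr rfl fun i _ => by ring

theorem pkerPoly_zero (c : ℝ) (δ : ℕ → ℝ) : pkerPoly 0 c δ = 1 := by
  simp [pkerPoly]

theorem derivative_pkerPoly_succ (m : ℕ) (c : ℝ) (δ : ℕ → ℝ) :
    derivative (pkerPoly (m + 1) c δ) = pkerPoly m c (fun i => δ (i + 1)) := by
  have hlead : derivative (C ((m + 1)! : ℝ)⁻¹ * (X + C c) ^ (m + 1))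
      = C (m ! : ℝ)⁻¹ * (X + C c) ^ m := by
    rw [derivative_C_mul, derivative_X_add_C_pow, Nat.add_sub_cancel, ← mul_assoc, ← C_mul,
      factorial_succ]
    push_cast
    field_simp
  have hmono (i : ℕ) :
      derivative (C (δ (i + 1) / (i + 1)!) * X ^ (i + 1)) = C (δ (i + 1) / i !) * X ^ i := by
    rw [derivative_C_mul_X_pow, Nat.add_sub_cancel, factorial_succ]
    push_cast
    field_simp
  rw [pkerPoly, pkerPoly, derivative_add, hlead, derivative_sum, Nat.add_sub_cancel]
  congr 1
  rcases m with _ | m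
  · simp
  · rw [sum_range_succ', Nat.add_sub_cancel]
    simp [hmono]

theorem iterate_derivative_pkerPoly {n k : ℕ} (hk : k ≤ n) (c : ℝ) (δ : ℕ → ℝ) :
    derivative^[k] (pkerPoly n c δ) = pkerPoly (n - k) c (fun i => δ (i + k)) := by
  induction k with
  | zero => rfl
  | succ k ih =>
    obtain ⟨m, hm⟩ : ∃ m, n - k = m + 1 := ⟨n - k - 1, by omega⟩
    rw [Function.iterate_succ_apply', ih (by omega), hm, derivative_pkerPoly_succ,
      show n - (k + 1) = m by omega]
    simp only [add_assoc, add_comm 1 k]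

theorem alphaA_eq_neg_one_pow_mul_Pker (n : ℕ) (a c : ℝ) (δ : ℕ → ℝ) (j : ℕ) :
    alphaA n a c δ j = (-1) ^ (j + 1) * Pker (j + 1) c (fun i => δ (i + n - 1 - j)) a := by
  rw [alphaA, Pker, Nat.add_sub_cancel]

theorem eval_iterate_derivative_pkerPoly_of_lt {n k : ℕ} (hk : k < n) (a c : ℝ)
    (δ : ℕ → ℝ) :
    (derivative^[k] (pkerPoly n c δ)).eval a = (-1) ^ (n - k) * alphaA n a c δ (n - 1 - k) := by
  obtain ⟨j, rfl⟩ : ∃ j, n = k + j + 1 := ⟨n - k - 1, by omega⟩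
  rw [iterate_derivative_pkerPoly hk.le, eval_pkerPoly, alphaA_eq_neg_one_pow_mul_Pker,
    show k + j + 1 - 1 - k = j by omega, show k + j + 1 - k = j + 1 by omega, ← mul_assoc,
    ← pow_add, Even.neg_one_pow ⟨_, rfl⟩, one_mul]
  congr 2
  funext i
  congr 1
  omega

theorem pkerPoly_eq_of_alphaA_eq_wA {n : ℕ} {a b c : ℝ} {δ : ℕ → ℝ}
    (hmatch : ∀ j < n, alphaA n a c δ j = wA n a b j) :
    pkerPoly n c δ = C ((2 * n)! : ℝ)⁻¹ * derivative^[n] ((X - C a) ^ n * (X - C b) ^ n) := by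
  refine eq_of_forall_eval_iterate_derivative_eq a fun k => ?_
  rw [iterate_derivative_C_mul, eval_mul, eval_C, ← Function.iterate_add_apply, add_comm k n,
    eval_iterate_derivative_pow_mul_pow]
  rcases lt_trichotomy k n with hk | rfl | hk
  · rw [eval_iterate_derivative_pkerPoly_of_lt hk, hmatch _ (by omega), wA_eq_of_lt _ _ (by omega)]
    obtain ⟨j, rfl⟩ : ∃ j, n = k + j + 1 := ⟨n - k - 1, by omega⟩
    rw [show k + j + 1 - 1 - k = j by omega, show k + j + 1 - k = j + 1 by omega,
      show 2 * (k + j + 1) - 1 - j = k + j + 1 + k by omega,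
      Nat.choose_symm_of_eq_add (show k + j + 1 = j + 1 + k by omega)]
    have : ((2 * (k + j + 1))! : ℝ) ≠ 0 := by positivity
    field_simp
    rw [← mul_pow]
    ring
  · rw [iterate_derivative_pkerPoly le_rfl, Nat.sub_self, pkerPoly_zero, eval_one,
      Nat.choose_self, ← two_mul]
    field_simp
    simp
  · obtain ⟨i, rfl⟩ : ∃ i, k = i + 1 + n := ⟨k - n - 1, by omega⟩
    rw [Function.iterate_add_apply, iterate_derivative_pkerPoly le_rfl, Nat.sub_self,
      pkerPoly_zero, Function.iterate_succ_apply, derivative_one, iterate_derivative_zero,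
      eval_zero, Nat.choose_eq_zero_of_lt (by omega)]
    simp

theorem integral_eval_mul_eval_iterate_derivative_eq_zero {a b : ℝ} {S : ℝ[X]} {m : ℕ}
    {f : ℝ[X]} (hf : derivative^[m] f = 0) (ha : (X - C a) ^ m ∣ S) (hb : (X - C b) ^ m ∣ S) :
    ∫ x in a..b, f.eval x * (derivative^[m] S).eval x = 0 := by
  induction m generalizing f with
  | zero => simp_all
  | succ m ih =>
    have hroot {r : ℝ} (hr : (X - C r) ^ (m + 1) ∣ S) : (derivative^[m] S).eval r = 0 := by
      have := pow_sub_dvd_iterate_derivative_of_pow_dvd m hr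
      rwa [Nat.add_sub_cancel_left, pow_one, dvd_iff_isRoot] at this
    have hpow {r : ℝ} (hr : (X - C r) ^ (m + 1) ∣ S) : (X - C r) ^ m ∣ S :=
      (pow_dvd_pow _ m.le_succ).trans hr
    have hf' : derivative^[m] (derivative f) = 0 := by rwa [← Function.iterate_succ_apply]
    rw [Function.iterate_succ_apply', integral_mul_deriv_eq_deriv_mul (fun x _ => f.hasDerivAt x)
      (fun x _ => (derivative^[m] S).hasDerivAt x)
      ((Polynomial.continuous _).intervalIntegrable _ _)
      ((Polynomial.continuous _).intervalIntegrable _ _),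
      hroot ha, hroot hb, ih hf' (hpow ha) (hpow hb)]
    ring

theorem stmt5_general (n : ℕ) (hn : 1 ≤ n) (a b : ℝ) (c : ℝ) (δ : ℕ → ℝ)
    (hmatch : ∀ j < n, alphaA n a c δ j = wA n a b j) :
    ∀ f : Polynomial ℝ, f.degree ≤ ((n - 1 : ℕ) : WithBot ℕ) →
      ∫ x in a..b, f.eval x * Pker n c δ x = 0 := by
  intro f hf
  have hfn : derivative^[n] f = 0 :=
    iterate_derivative_eq_zero ((natDegree_le_iff_degree_le.mpr hf).trans_lt (by omega))
  simp_rw [← eval_pkerPoly, pkerPoly_eq_of_alphaA_eq_wA hmatch, eval_mul, eval_C,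
    mul_left_comm _ ((2 * n)! : ℝ)⁻¹]
  rw [integral_const_mul, integral_eval_mul_eval_iterate_derivative_eq_zero hfn
    (dvd_mul_right _ _) (dvd_mul_left _ _), mul_zero]

/-- if the parameters match the Hermite weights at `a`, the polynomial kernel
`P(·,θ)` is orthogonal on `[a,b]` to all polynomials of degree at most `n-1`. -/
theorem stmt5 (n : ℕ) (hn : 1 ≤ n) (a b : ℝ) (hab : a < b) (c : ℝ) (δ : ℕ → ℝ)
    (hmatch : ∀ j < n, alphaA n a c δ j = wA n a b j) :
    ∀ f : Polynomial ℝ, f.degree ≤ ((n - 1 : ℕ) : WithBot ℕ) →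
      ∫ x in a..b, f.eval x * Pker n c δ x = 0 :=
  stmt5_general n hn a b c δ hmatch
end

section
/- Let n ≥ 1 be an integer, let a < b be real numbers, and let θ = (c, δ_0, …, δ_{n-2}) be real parameters such that ∫_a^b f(x) P(x,θ) dx = 0 for every polynomial f of degree ≤ n-1. Then the polynomial kernel is, up to sign, symmetric about the midpoint x = (a+b)/2: P(a+b-x, θ) = (-1)^n P(x, θ) for all real x. -/
open Finset intervalIntegral

/-!
The kernel is a polynomial P of degree n and leading coefficient 1/n!, orthogonal on [a,b] to
all polynomials of degree < n. Its reflection Q(x) = (-1)^n P(a+b-x) has the same property,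
since x ↦ a+b-x maps [a,b] onto itself and preserves degrees, and the sign (-1)^n makes the
leading coefficients of P and Q agree. So P - Q has degree < n and is orthogonal to itself,
hence zero.
-/

open Polynomial MeasureTheory

namespace Polynomial

variable {R : Type*}

lemma degree_le_sub_one_of_degree_lt [Semiring R] {p : R[X]} {n : ℕ} (h : p.degree < n) :
    p.degree ≤ (n - 1 : ℕ) := by
  rcases eq_or_ne p 0 with rfl | hp
  · exact degree_zero.trans_le bot_le
  · exact degree_le_of_natDegree_le (by have := (natDegree_lt_iff_degree_lt hp).2 h; omega)

section

variable [CommRing R]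

lemma leadingCoeff_C_sub_X (s : R) : (C s - X).leadingCoeff = -1 := by
  rw [← neg_sub, leadingCoeff_neg, leadingCoeff_X_sub_C]

variable [Nontrivial R]

lemma degree_C_sub_X (s : R) : (C s - X).degree = 1 := by
  rw [← neg_sub, degree_neg, degree_X_sub_C]

lemma natDegree_C_sub_X (s : R) : (C s - X).natDegree = 1 :=
  natDegree_eq_of_degree_eq_some (degree_C_sub_X s)

variable [NoZeroDivisors R]

lemma degree_comp_C_sub_X (p : R[X]) (s : R) : (p.comp (C s - X)).degree = p.degree := by
  rw [degree_comp (by rw [degree_C_sub_X]; exact zero_lt_one), degree_C_sub_X, mul_one]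

lemma degree_sub_C_mul_comp_C_sub_X_lt {p : R[X]} (hp : p ≠ 0) (s : R) :
    (p - C ((-1) ^ p.natDegree) * p.comp (C s - X)).degree < p.degree := by
  have hsign : ((-1 : R) ^ p.natDegree) ^ 2 = 1 := by
    rw [← pow_mul, mul_comm, pow_mul, neg_one_sq, one_pow]
  refine degree_sub_lt_left ?_ hp ?_
  · rw [degree_C_mul (pow_ne_zero _ (neg_ne_zero.2 one_ne_zero)), degree_comp_C_sub_X]
  · rw [leadingCoeff_mul, leadingCoeff_C,
      leadingCoeff_comp (by rw [natDegree_C_sub_X]; exact one_ne_zero), leadingCoeff_C_sub_X,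
      ← mul_assoc, mul_comm, ← mul_assoc, ← sq, hsign, one_mul]

end

lemma eq_zero_of_intervalIntegral_sq_eq_zero {p : ℝ[X]} {a b : ℝ} (hab : a < b)
    (h : ∫ x in a..b, p.eval x ^ 2 = 0) : p = 0 := by
  by_contra hp
  obtain ⟨t, ht, hpt⟩ : ∃ t ∈ Set.Icc a b, p.eval t ≠ 0 := by
    by_contra! hroots
    exact hp (eq_zero_of_infinite_isRoot p ((Set.Icc_infinite hab).mono hroots))
  exact (integral_pos (f := fun x => p.eval x ^ 2) hab (by fun_prop) (fun _ _ => sq_nonneg _)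
    ⟨t, ht, sq_pos_of_ne_zero hpt⟩).ne' h

end Polynomial

def IsOrthogonalToDegreeLT (a b : ℝ) (n : ℕ) (p : ℝ[X]) : Prop :=
  ∀ f : ℝ[X], f.degree < n → ∫ x in a..b, f.eval x * p.eval x = 0

namespace IsOrthogonalToDegreeLT

variable {a b : ℝ} {n : ℕ} {p q : ℝ[X]}

lemma const_mul (hp : IsOrthogonalToDegreeLT a b n p) (r : ℝ) :
    IsOrthogonalToDegreeLT a b n (C r * p) := fun f hf => by
  simp only [eval_mul, eval_C, mul_left_comm _ r, intervalIntegral.integral_const_mul, hp f hf,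
    mul_zero]

lemma comp_C_sub_X (hp : IsOrthogonalToDegreeLT a b n p) :
    IsOrthogonalToDegreeLT a b n (p.comp (C (a + b) - X)) := fun f hf => by
  have hf' := hp _ ((degree_comp_C_sub_X f (a + b)).trans_lt hf)
  have hreflect := integral_comp_sub_left (a := a) (b := b)
    (fun x => f.eval (a + b - x) * p.eval x) (a + b)
  simp only [sub_sub_cancel, add_sub_cancel_left, add_sub_cancel_right] at hreflect
  simp only [eval_comp, eval_sub, eval_C, eval_X] at hf' ⊢
  rw [hreflect, hf']

lemma eq_of_degree_sub_lt (hab : a < b) (hp : IsOrthogonalToDegreeLT a b n p)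
    (hq : IsOrthogonalToDegreeLT a b n q) (hpq : (p - q).degree < n) : p = q := by
  have hint : ∀ r : ℝ[X], IntervalIntegrable (fun x => (p - q).eval x * r.eval x) volume a b :=
    fun r => (by fun_prop : Continuous _).intervalIntegrable a b
  have hsq : ∫ x in a..b, (p - q).eval x ^ 2 =
      (∫ x in a..b, (p - q).eval x * p.eval x) - ∫ x in a..b, (p - q).eval x * q.eval x := by
    rw [← integral_sub (hint p) (hint q)]
    congr 1 with x
    rw [eval_sub]
    ring
  rw [hp _ hpq, hq _ hpq, sub_zero] at hsq
  exact sub_eq_zero.1 (eq_zero_of_intervalIntegral_sq_eq_zero hab hsq)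

end IsOrthogonalToDegreeLT

noncomputable def kernelPoly (n : ℕ) (c : ℝ) (δ : ℕ → ℝ) : ℝ[X] :=
  C ((Nat.factorial n : ℝ)⁻¹) * (X + C c) ^ n +
    ∑ i ∈ range (n - 1), C (δ i / Nat.factorial i) * X ^ i

lemma eval_kernelPoly (n : ℕ) (c : ℝ) (δ : ℕ → ℝ) (x : ℝ) :
    (kernelPoly n c δ).eval x = Pker n c δ x := by
  simp only [kernelPoly, Pker, eval_add, eval_mul, eval_pow, eval_C, eval_X, eval_finsetSum,
    inv_mul_eq_div, div_mul_eq_mul_div]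

lemma degree_kernelPoly (n : ℕ) (c : ℝ) (δ : ℕ → ℝ) :
    (kernelPoly n c δ).degree = (n : WithBot ℕ) := by
  have hlead : (C ((Nat.factorial n : ℝ)⁻¹) * (X + C c) ^ n).degree = (n : WithBot ℕ) := by
    rw [degree_C_mul (by positivity), degree_pow, degree_X_add_C, nsmul_one]
  have htail :
      (∑ i ∈ range (n - 1), C (δ i / Nat.factorial i) * X ^ i).degree < (n : WithBot ℕ) := by
    refine (degree_sum_le _ _).trans_lt ((Finset.sup_lt_iff (WithBot.bot_lt_coe n)).2 ?_)
    intro i hi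
    exact (degree_C_mul_X_pow_le _ _).trans_lt
      (by rw [mem_range] at hi; exact Nat.cast_lt.2 (by omega))
  rw [kernelPoly, degree_add_eq_left_of_degree_lt (hlead ▸ htail), hlead]

theorem stmt6_general (n : ℕ) (a b : ℝ) (hab : a < b) (c : ℝ) (δ : ℕ → ℝ)
    (horth : ∀ f : Polynomial ℝ, f.degree ≤ ((n - 1 : ℕ) : WithBot ℕ) →
      ∫ x in a..b, f.eval x * Pker n c δ x = 0) :
    ∀ x : ℝ, Pker n c δ (a + b - x) = (-1 : ℝ) ^ n * Pker n c δ x := by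
  intro x
  set P := kernelPoly n c δ
  have hPdeg : P.degree = n := degree_kernelPoly n c δ
  have hP0 : P ≠ 0 := fun h => by simp [h] at hPdeg
  have hPnat : P.natDegree = n := natDegree_eq_of_degree_eq_some hPdeg
  have hP : IsOrthogonalToDegreeLT a b n P := fun f hf => by
    simpa only [P, eval_kernelPoly] using horth f (degree_le_sub_one_of_degree_lt hf)
  have hPQ := hP.eq_of_degree_sub_lt hab (hP.comp_C_sub_X.const_mul ((-1) ^ n))
    (by simpa only [hPnat, hPdeg] using degree_sub_C_mul_comp_C_sub_X_lt hP0 (a + b))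
  simpa only [eval_mul, eval_C, eval_comp, eval_sub, eval_X, sub_sub_cancel, P, eval_kernelPoly]
    using congrArg (eval (a + b - x)) hPQ

/-- if the kernel is orthogonal to all polynomials of degree ≤ n-1 on `[a,b]`,
then it is symmetric (up to the sign `(-1)^n`) about the midpoint `(a+b)/2`. -/
theorem stmt6 (n : ℕ) (hn : 1 ≤ n) (a b : ℝ) (hab : a < b) (c : ℝ) (δ : ℕ → ℝ)
    (horth : ∀ f : Polynomial ℝ, f.degree ≤ ((n - 1 : ℕ) : WithBot ℕ) →
      ∫ x in a..b, f.eval x * Pker n c δ x = 0) :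
    ∀ x : ℝ, Pker n c δ (a + b - x) = (-1 : ℝ) ^ n * Pker n c δ x :=
  stmt6_general n a b hab c δ horth
end

section
/- For every integer n ≥ 1, the combinatorial identity n · Σ_{k=0}^{n-1} (n+k-1)!/(n+k+1)! = 1/2 holds; equivalently, for real numbers a < b, the zeroth Hermite quadrature weight satisfies w_0^a = (b-a)/2. -/
open Finset intervalIntegral

/-! The summand is `1 / (m (m + 1)) = 1 / m - 1 / (m + 1)` with `m = n + k`, so the sum telescopes
to `1 / n - 1 / (2 n)`, and multiplying by `n` gives `1 / 2`. The weight `w_0^a` is `(b - a)` times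
this quantity, since `C(k, 0) = 1`. -/

open Nat

theorem factorial_sub_one_div_factorial_add_one {m : ℕ} (hm : m ≠ 0) :
    ((m - 1)! : ℝ) / (m + 1)! = 1 / m - 1 / (m + 1) := by
  obtain ⟨j, rfl⟩ := exists_eq_succ_of_ne_zero hm
  rw [succ_sub_one, factorial_succ (j + 1), factorial_succ j]
  push_cast
  field_simp
  ring

theorem sum_range_factorial_sub_one_div_factorial_add_one {n : ℕ} (hn : n ≠ 0) :
    ∑ k ∈ range n, ((n + k - 1)! : ℝ) / (n + k + 1)! = 1 / n - 1 / (2 * n) := by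
  calc ∑ k ∈ range n, ((n + k - 1)! : ℝ) / (n + k + 1)!
      = ∑ k ∈ range n, ((1 : ℝ) / ↑(n + k) - 1 / ↑(n + (k + 1))) :=
        sum_congr rfl fun k _ => by
          rw [factorial_sub_one_div_factorial_add_one (by omega)]
          push_cast; ring
    _ = 1 / n - 1 / (2 * n) := by
        rw [sum_range_sub' (fun k => (1 : ℝ) / ↑(n + k))]
        push_cast; ring

theorem mul_sum_range_factorial_sub_one_div_factorial_add_one {n : ℕ} (hn : n ≠ 0) :
    (n : ℝ) * ∑ k ∈ range n, ((n + k - 1)! : ℝ) / (n + k + 1)! = 1 / 2 := by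
  rw [sum_range_factorial_sub_one_div_factorial_add_one hn]
  field_simp
  ring

theorem wA_zero {n : ℕ} (hn : n ≠ 0) (a b : ℝ) :
    wA n a b 0 = (b - a) * (n * ∑ k ∈ range n, ((n + k - 1)! : ℝ) / (n + k + 1)!) := by
  have hIcc : Icc 0 (n - 1) = range n := by
    ext k; simp only [mem_Icc, mem_range]; omega
  simp only [wA, hIcc, zero_add, pow_one, choose_zero_right, cast_one, one_mul, Nat.sub_zero,
    mul_assoc]

/-- `n Σ_{k=0}^{n-1} (n+k-1)!/(n+k+1)! = 1/2`; equivalently `w_0^a = (b-a)/2`. -/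
theorem stmt7 (n : ℕ) (hn : 1 ≤ n) :
    (n : ℝ) * (∑ k ∈ Finset.range n,
        (Nat.factorial (n + k - 1) : ℝ) / (Nat.factorial (n + k + 1))) = 1 / 2
    ∧ ∀ a b : ℝ, a < b → wA n a b 0 = (b - a) / 2 := by
  have hn₀ : n ≠ 0 := by omega
  refine ⟨mul_sum_range_factorial_sub_one_div_factorial_add_one hn₀, fun a b _ => ?_⟩
  rw [wA_zero hn₀, mul_sum_range_factorial_sub_one_div_factorial_add_one hn₀]
  ring
end

section
/- Let n ≥ 1 be an integer and let a < b be real numbers. For any real parameters θ = (c, δ_0, …, δ_{n-2}), the equation α_0^a = w_0^a holds if and only if c = -(a+b)/2; moreover the value of c is independent of n. -/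
open Finset intervalIntegral

/-! The summands of `w_0^a` telescope: `(m+k)!/(m+k+2)! = 1/(m+k+1) - 1/(m+k+2)`, so
`w_0^a = (b-a)/2` for every `n ≥ 1`, while `α_0^a = -(a+c)`. -/

theorem factorial_div_factorial_add_two (m : ℕ) :
    (m.factorial : ℝ) / (m + 2).factorial = 1 / (m + 1) - 1 / (m + 2) := by
  rw [Nat.factorial_succ, Nat.factorial_succ]
  push_cast
  field_simp
  ring

theorem sum_range_factorial_div_factorial_add_two (m N : ℕ) :
    ∑ k ∈ range N, ((m + k).factorial : ℝ) / (m + k + 2).factorial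
      = 1 / (m + 1) - 1 / (m + N + 1) := by
  have telescope := sum_range_sub' (fun k : ℕ => 1 / ((m + k + 1 : ℕ) : ℝ)) N
  simp only [factorial_div_factorial_add_two]
  push_cast at telescope ⊢
  convert telescope using 1
  · exact sum_congr rfl fun k _ => by ring
  · simp

theorem wA_zero_s8 (m : ℕ) (a b : ℝ) : wA (m + 1) a b 0 = (b - a) / 2 := by
  have hIcc : Icc 0 (m + 1 - 1) = range (m + 1) := by ext; simp
  have hterm (k : ℕ) : m + 1 + k - 0 - 1 = m + k := by omega
  simp only [wA, hIcc, hterm, Nat.choose_zero_right, Nat.cast_one, one_mul,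
    show ∀ k, m + 1 + k + 1 = m + k + 2 from fun k => by omega,
    sum_range_factorial_div_factorial_add_two]
  push_cast
  field_simp
  ring

theorem alphaA_zero (n : ℕ) (a c : ℝ) (δ : ℕ → ℝ) : alphaA n a c δ 0 = -(a + c) := by
  simp [alphaA]

theorem stmt8_general (a b : ℝ) :
    ∀ n : ℕ, 1 ≤ n → ∀ (c : ℝ) (δ : ℕ → ℝ),
      (alphaA n a c δ 0 = wA n a b 0 ↔ c = -(a + b) / 2) := by
  intro n hn c δ
  obtain ⟨m, rfl⟩ := Nat.exists_eq_add_of_le' hn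
  rw [alphaA_zero, wA_zero_s8]
  constructor <;> intro h <;> linarith

/-- for any `n ≥ 1`, `α_0^a = w_0^a` iff `c = -(a+b)/2`; in particular the
value of `c` is independent of `n`. -/
theorem stmt8 (a b : ℝ) (hab : a < b) :
    ∀ n : ℕ, 1 ≤ n → ∀ (c : ℝ) (δ : ℕ → ℝ),
      (alphaA n a c δ 0 = wA n a b 0 ↔ c = -(a + b) / 2) :=
  stmt8_general a b
end

section
/- Let a < b be real numbers. Then the L^1 norm of the n = 2 Hermite quadrature kernel over [a,b] is ∫_a^b |K_2(x)| dx = √3 · (b-a)^3 / 54. -/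
open Finset intervalIntegral

/-!
With `m = (a+b)/2` and `r = √3 (b-a)/6` the kernel is `((x-m)² - r²)/2`: it is nonnegative outside
`[m-r, m+r]` and nonpositive inside, so `∫ |K₂|` is an alternating sum of values of the
antiderivative `F(x) = ((x-m)³/3 - r²(x-m))/2` at `a, m-r, m+r, b`. Since `(b-a)/2 = √3 r`,
`F` vanishes at `a` and `b`, and the integral is `2 (F(m-r) - F(m+r)) = 4r³/3 = √3 (b-a)³/54`.
-/

/-- The `n = 2` Hermite quadrature kernel `K₂(x) = (x-(a+b)/2)²/2 - (b-a)²/24`. -/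
noncomputable def K2 (a b x : ℝ) : ℝ := (x - (a + b) / 2) ^ 2 / 2 - (b - a) ^ 2 / 24

section SignPattern

variable {f F : ℝ → ℝ} {u v : ℝ}

lemma integral_abs_eq_sub_of_nonneg (hF : ∀ x, HasDerivAt F (f x) x) (hf : Continuous f)
    (huv : u ≤ v) (hpos : ∀ x ∈ Set.Icc u v, 0 ≤ f x) :
    ∫ x in u..v, |f x| = F v - F u := by
  rw [integral_congr fun x hx => abs_of_nonneg (hpos x (by rwa [Set.uIcc_of_le huv] at hx))]
  exact integral_eq_sub_of_hasDerivAt (fun x _ => hF x) (hf.intervalIntegrable u v)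

lemma integral_abs_eq_sub_of_nonpos (hF : ∀ x, HasDerivAt F (f x) x) (hf : Continuous f)
    (huv : u ≤ v) (hneg : ∀ x ∈ Set.Icc u v, f x ≤ 0) :
    ∫ x in u..v, |f x| = F u - F v := by
  have h := integral_abs_eq_sub_of_nonneg (f := fun x => -f x) (F := fun x => -F x)
    (fun x => (hF x).neg) hf.neg huv fun x hx => neg_nonneg.mpr (hneg x hx)
  simp only [abs_neg] at h
  rw [h]
  ring

lemma integral_abs_eq_of_sign_pattern (hF : ∀ x, HasDerivAt F (f x) x) (hf : Continuous f)
    {a b c d : ℝ} (hac : a ≤ c) (hcd : c ≤ d) (hdb : d ≤ b)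
    (hpos₁ : ∀ x ∈ Set.Icc a c, 0 ≤ f x) (hneg : ∀ x ∈ Set.Icc c d, f x ≤ 0)
    (hpos₂ : ∀ x ∈ Set.Icc d b, 0 ≤ f x) :
    ∫ x in a..b, |f x| = (F c - F a) + (F c - F d) + (F b - F d) := by
  have hint : ∀ p q : ℝ, IntervalIntegrable (fun x => |f x|) MeasureTheory.volume p q :=
    fun p q => hf.abs.intervalIntegrable p q
  rw [← integral_add_adjacent_intervals (hint a c) (hint c b),
    ← integral_add_adjacent_intervals (hint c d) (hint d b),
    integral_abs_eq_sub_of_nonneg hF hf hac hpos₁, integral_abs_eq_sub_of_nonpos hF hf hcd hneg,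
    integral_abs_eq_sub_of_nonneg hF hf hdb hpos₂, add_assoc]

end SignPattern

lemma integral_abs_sq_sub_sq {m r h : ℝ} (hr : 0 ≤ r) (hrh : r ≤ h) :
    ∫ x in (m - h)..(m + h), |(x - m) ^ 2 - r ^ 2| =
      8 * r ^ 3 / 3 + 2 * h * (h ^ 2 / 3 - r ^ 2) := by
  have hF : ∀ x, HasDerivAt (fun y => (y - m) ^ 3 / 3 - r ^ 2 * (y - m))
      ((x - m) ^ 2 - r ^ 2) x := fun x =>
    ((((hasDerivAt_id' x).sub_const m).pow 3).div_const 3 |>.sub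
      (((hasDerivAt_id' x).sub_const m).const_mul (r ^ 2))).congr_deriv (by ring)
  rw [integral_abs_eq_of_sign_pattern hF (by fun_prop) (c := m - r) (d := m + r)
    (by linarith) (by linarith) (by linarith)]
  · ring
  · rintro x ⟨-, hx⟩
    nlinarith
  · rintro x ⟨hx₁, hx₂⟩
    nlinarith
  · rintro x ⟨hx, -⟩
    nlinarith

lemma K2_eq (a b x : ℝ) :
    K2 a b x = ((x - (a + b) / 2) ^ 2 - (Real.sqrt 3 * (b - a) / 6) ^ 2) / 2 := by
  have h3 : Real.sqrt 3 ^ 2 = 3 := Real.sq_sqrt (by norm_num)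
  rw [K2, mul_div_assoc, mul_pow, h3]
  ring

/-- the `L¹` norm of the `n = 2` Hermite quadrature kernel over `[a,b]`
is `√3 (b-a)³/54`. -/
theorem stmt17 (a b : ℝ) (hab : a < b) :
    ∫ x in a..b, |K2 a b x| = Real.sqrt 3 * (b - a) ^ 3 / 54 := by
  set m := (a + b) / 2
  set r := Real.sqrt 3 * (b - a) / 6 with hr_def
  have h3 : Real.sqrt 3 ^ 2 = 3 := Real.sq_sqrt (by norm_num)
  have hr : 0 ≤ r := by
    have : 0 ≤ b - a := by linarith
    positivity
  have hrh : r ≤ (b - a) / 2 := by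
    nlinarith [Real.sqrt_nonneg 3]
  calc ∫ x in a..b, |K2 a b x|
      = (∫ x in (m - (b - a) / 2)..(m + (b - a) / 2), |(x - m) ^ 2 - r ^ 2|) / 2 := by
        rw [show m - (b - a) / 2 = a by ring, show m + (b - a) / 2 = b by ring,
          ← integral_div]
        simp only [K2_eq, abs_div, abs_two, m, r]
    _ = Real.sqrt 3 * (b - a) ^ 3 / 54 := by
        rw [integral_abs_sq_sub_sq hr hrh, hr_def]
        linear_combination (Real.sqrt 3 * (b - a) ^ 3 / 162 - (b - a) ^ 3 / 72) * h3
end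

section
/- Let a < b be real numbers, let f : ℝ → ℝ be twice continuously differentiable on [a,b], and suppose |f''(x)| ≤ M for all x ∈ [a,b]. Then the n = 2 Hermite quadrature error satisfies |E_2| = | ∫_a^b f(x) dx - (b-a)/2 · (f(a) + f(b)) - (b-a)^2/12 · (f'(a) - f'(b)) | ≤ M · √3 · (b-a)^3 / 54. -/
open Finset intervalIntegral

open scoped Topology

/-! Peano kernel argument. Integrating by parts twice against
`K t = (t - a) (t - b) / 2 + (b - a)² / 12`, which equals `(b - a)² / 12` at both endpoints,
turns the error into `∫ K f''`, so `|E₂| ≤ M ∫ |K|`. Writing `K t = ((t - c)² - δ²) / 2` with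
`c` the midpoint and `δ = √3 (b - a) / 6`, the sign of `K` changes only at `c ± δ`, and splitting
there gives `∫ |K| = √3 (b - a)³ / 54`. -/

theorem ContDiffOn.hasDerivAt_iteratedDerivWithin {𝕜 F : Type*} [NontriviallyNormedField 𝕜]
    [NormedAddCommGroup F] [NormedSpace 𝕜 F] {f : 𝕜 → F} {s : Set 𝕜} {x : 𝕜} {n : WithTop ℕ∞}
    {m : ℕ} (hf : ContDiffOn 𝕜 n f s) (hmn : m < n) (hs : UniqueDiffOn 𝕜 s) (hx : s ∈ 𝓝 x) :
    HasDerivAt (iteratedDerivWithin m f s) (iteratedDerivWithin (m + 1) f s x) x := by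
  rw [iteratedDerivWithin_succ]
  exact ((hf.differentiableOn_iteratedDerivWithin hmn hs) x
    (mem_of_mem_nhds hx)).hasDerivWithinAt.hasDerivAt hx

theorem integral_abs_sq_sub_sq_s18 {δ h : ℝ} (hδ : 0 ≤ δ) (hδh : δ ≤ h) :
    ∫ t in -h..h, |t ^ 2 - δ ^ 2| = 2 * (4 * δ ^ 3 + h ^ 3 - 3 * δ ^ 2 * h) / 3 := by
  have hint (c d : ℝ) :
      IntervalIntegrable (fun t : ℝ => |t ^ 2 - δ ^ 2|) MeasureTheory.volume c d := by
    apply Continuous.intervalIntegrable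
    fun_prop
  have primitive (c d : ℝ) :
      ∫ t in c..d, (t ^ 2 - δ ^ 2) = (d ^ 3 - c ^ 3) / 3 - δ ^ 2 * (d - c) := by
    simp only [intervalIntegral.integral_sub, intervalIntegrable_pow, intervalIntegrable_const,
      integral_pow, integral_const, smul_eq_mul]
    ring
  have outer_left : ∫ t in -h..-δ, |t ^ 2 - δ ^ 2| = ∫ t in -h..-δ, (t ^ 2 - δ ^ 2) := by
    refine integral_congr fun t ht => abs_of_nonneg ?_
    rw [Set.uIcc_of_le (by linarith)] at ht
    nlinarith [ht.1, ht.2]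
  have inner : ∫ t in -δ..δ, |t ^ 2 - δ ^ 2| = -∫ t in -δ..δ, (t ^ 2 - δ ^ 2) := by
    rw [← intervalIntegral.integral_neg]
    refine integral_congr fun t ht => abs_of_nonpos ?_
    rw [Set.uIcc_of_le (by linarith)] at ht
    nlinarith [ht.1, ht.2]
  have outer_right : ∫ t in δ..h, |t ^ 2 - δ ^ 2| = ∫ t in δ..h, (t ^ 2 - δ ^ 2) := by
    refine integral_congr fun t ht => abs_of_nonneg ?_
    rw [Set.uIcc_of_le hδh] at ht
    nlinarith [ht.1, ht.2]
  rw [← integral_add_adjacent_intervals (hint _ (-δ)) (hint _ h),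
    ← integral_add_adjacent_intervals (hint _ δ) (hint _ h), outer_left, inner, outer_right,
    primitive, primitive, primitive]
  ring

noncomputable def hermiteKernel (a b t : ℝ) : ℝ := (t - a) * (t - b) / 2 + (b - a) ^ 2 / 12

theorem continuous_hermiteKernel (a b : ℝ) : Continuous (hermiteKernel a b) := by
  unfold hermiteKernel
  fun_prop

theorem hasDerivAt_hermiteKernel (a b t : ℝ) :
    HasDerivAt (hermiteKernel a b) (t - (a + b) / 2) t := by
  have h := (((hasDerivAt_id t).sub_const a).mul ((hasDerivAt_id t).sub_const b)).div_const 2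
    |>.add_const ((b - a) ^ 2 / 12)
  exact h.congr_deriv (by simp only [id]; ring)

theorem integral_sub_hermite_eq_integral_hermiteKernel_mul {a b : ℝ} {f f' f'' : ℝ → ℝ}
    (hab : a ≤ b) (hf : ContinuousOn f (Set.Icc a b)) (hf' : ContinuousOn f' (Set.Icc a b))
    (hf'' : IntervalIntegrable f'' MeasureTheory.volume a b)
    (hdf : ∀ x ∈ Set.Ioo a b, HasDerivAt f (f' x) x)
    (hdf' : ∀ x ∈ Set.Ioo a b, HasDerivAt f' (f'' x) x) :
    (∫ x in a..b, f x) - (b - a) / 2 * (f a + f b) - (b - a) ^ 2 / 12 * (f' a - f' b) =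
      ∫ x in a..b, hermiteKernel a b x * f'' x := by
  rw [← Set.uIcc_of_le hab] at hf hf'
  have hIoo : Set.Ioo (min a b) (max a b) = Set.Ioo a b := by
    rw [min_eq_left hab, max_eq_right hab]
  rw [← hIoo] at hdf hdf'
  have hlin (x : ℝ) : HasDerivAt (fun x => x - (a + b) / 2) 1 x :=
    (hasDerivAt_id x).sub_const _
  have parts₁ := integral_mul_deriv_eq_deriv_mul_of_hasDerivAt
    (continuous_hermiteKernel a b).continuousOn hf'
    (fun x _ => hasDerivAt_hermiteKernel a b x) hdf'
    (by apply Continuous.intervalIntegrable; fun_prop) hf''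
  have parts₂ := integral_mul_deriv_eq_deriv_mul_of_hasDerivAt
    (fun x _ => (hlin x).continuousAt.continuousWithinAt) hf (fun x _ => hlin x) hdf
    intervalIntegrable_const (hf'.intervalIntegrable)
  simp only [one_mul] at parts₂
  rw [parts₁, parts₂]
  simp only [hermiteKernel]
  ring

theorem integral_abs_hermiteKernel {a b : ℝ} (hab : a ≤ b) :
    ∫ t in a..b, |hermiteKernel a b t| = √3 * (b - a) ^ 3 / 54 := by
  set δ := √3 * (b - a) / 6 with hδ
  have hδsq : δ ^ 2 = (b - a) ^ 2 / 12 := by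
    rw [hδ, div_pow, mul_pow, Real.sq_sqrt (by norm_num : (0 : ℝ) ≤ 3)]
    ring
  have hK (t : ℝ) : |hermiteKernel a b t| = |(t - (a + b) / 2) ^ 2 - δ ^ 2| / 2 := by
    rw [← abs_two, ← abs_div, abs_two, hermiteKernel]
    congr 1
    linear_combination (1 / 2) * hδsq
  have hδ₀ : 0 ≤ δ := by positivity
  have hδh : δ ≤ (b - a) / 2 := by
    have : √3 ≤ 3 := Real.sqrt_le_iff.2 ⟨by norm_num, by norm_num⟩
    rw [hδ]
    nlinarith
  simp_rw [hK]
  rw [intervalIntegral.integral_div,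
    intervalIntegral.integral_comp_sub_right (fun t => |t ^ 2 - δ ^ 2|),
    show a - (a + b) / 2 = -((b - a) / 2) by ring, show b - (a + b) / 2 = (b - a) / 2 by ring,
    integral_abs_sq_sub_sq_s18 hδ₀ hδh]
  linear_combination (4 / 3 * δ - (b - a) / 2) * hδsq + (b - a) ^ 2 / 9 * hδ

theorem abs_integral_hermiteKernel_mul_le {a b M : ℝ} {g : ℝ → ℝ} (hab : a ≤ b)
    (hg : ∀ x ∈ Set.Icc a b, |g x| ≤ M) :
    |∫ x in a..b, hermiteKernel a b x * g x| ≤ M * √3 * (b - a) ^ 3 / 54 := by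
  calc |∫ x in a..b, hermiteKernel a b x * g x|
      ≤ ∫ x in a..b, |hermiteKernel a b x| * M := by
        rw [← Real.norm_eq_abs]
        refine norm_integral_le_of_norm_le hab (Filter.Eventually.of_forall fun x hx => ?_)
          ((continuous_hermiteKernel a b).abs.mul continuous_const |>.intervalIntegrable _ _)
        rw [Real.norm_eq_abs, abs_mul]
        exact mul_le_mul_of_nonneg_left (hg x (Set.Ioc_subset_Icc_self hx)) (abs_nonneg _)
    _ = M * √3 * (b - a) ^ 3 / 54 := by
        rw [intervalIntegral.integral_mul_const, integral_abs_hermiteKernel hab]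
        ring

/-- the classical bound `|E₂| ≤ M √3 (b-a)³/54` for the `n = 2` Hermite
quadrature error under the uniform bound `|f''| ≤ M` on `[a,b]`. -/
theorem stmt18 (a b : ℝ) (hab : a < b) (f : ℝ → ℝ) (M : ℝ)
    (hf : ContDiffOn ℝ 2 f (Set.Icc a b))
    (hM : ∀ x ∈ Set.Icc a b, |iteratedDerivWithin 2 f (Set.Icc a b) x| ≤ M) :
    |(∫ x in a..b, f x) - (b - a) / 2 * (f a + f b)
        - (b - a) ^ 2 / 12 *
          (iteratedDerivWithin 1 f (Set.Icc a b) a - iteratedDerivWithin 1 f (Set.Icc a b) b)|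
      ≤ M * Real.sqrt 3 * (b - a) ^ 3 / 54 := by
  have hs := uniqueDiffOn_Icc hab
  have hderiv (m : ℕ) (hm : m < 2) (x : ℝ) (hx : x ∈ Set.Ioo a b) :=
    hf.hasDerivAt_iteratedDerivWithin (by exact_mod_cast hm) hs (Icc_mem_nhds hx.1 hx.2)
  rw [integral_sub_hermite_eq_integral_hermiteKernel_mul hab.le hf.continuousOn
    (hf.continuousOn_iteratedDerivWithin (by norm_num) hs)
    ((hf.continuousOn_iteratedDerivWithin le_rfl hs).intervalIntegrable_of_Icc hab.le)
    (by simpa only [iteratedDerivWithin_zero] using hderiv 0 (by norm_num)) (hderiv 1 one_lt_two)]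
  exact abs_integral_hermiteKernel_mul_le hab.le hM
end
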